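/- Let n, v be unit vectors in ℝ^D with ⟨n,v⟩ = cos φ > 0, let K be a symmetric positive-definite operator on 𝒯 = n^⊥ with eigenvalues in [κ_min, κ_max] (0 < κ_min ≤ κ_max), and let Θ = ⟨n,v⟩ V* K V where V : v^⊥ → n^⊥, V dv = dv − (⟨dv,n⟩/⟨n,v⟩)v, and V* : n^⊥ → v^⊥, V* dq = dq − (⟨dq,v⟩/⟨n,v⟩)n. Then κ_min cos φ ≤ ‖Θ‖ ≤ κ_max / cos φ, where ‖·‖ is the operator norm. -/

import Mathlib

open scoped RealInnerProductSpace

/-- The projection V : v^⊥ → n^⊥ along v. -/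
noncomputable def projV {D : ℕ} (n v dv : EuclideanSpace ℝ (Fin D)) :
    EuclideanSpace ℝ (Fin D) :=
  dv - (⟪dv, n⟫ / ⟪n, v⟫) • v

/-- The projection V* : n^⊥ → v^⊥ along n. -/
noncomputable def projVStar {D : ℕ} (n v dq : EuclideanSpace ℝ (Fin D)) :
    EuclideanSpace ℝ (Fin D) :=
  dq - (⟪dq, v⟫ / ⟪n, v⟫) • n

/-- The collision operator Θ = ⟨n,v⟩ V* K V. -/
noncomputable def collisionOp {D : ℕ} (n v : EuclideanSpace ℝ (Fin D))
    (K : EuclideanSpace ℝ (Fin D) →ₗ[ℝ] EuclideanSpace ℝ (Fin D))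
    (dv : EuclideanSpace ℝ (Fin D)) : EuclideanSpace ℝ (Fin D) :=
  ⟪n, v⟫ • projVStar n v (K (projV n v dv))

/-!
`V` shears `v^⊥` onto `n^⊥` along `v` and `V*` shears `n^⊥` onto `v^⊥` along `n`. By Pythagoras,
such a shear between unit vectors with `⟪n, v⟫ = c > 0` lengthens vectors by a factor between
`1` and `1 / c`. On `n^⊥`, the symmetric map `K` scales lengths by a factor between `κmin` and
`κmax`; the upper bound is Cauchy–Schwarz for the semidefinite form `⟪K ·, ·⟫`. Composing the
factors with the prefactor `c` gives `κmin c ≤ ‖Θ‖ ≤ c · κmax / c² = κmax / c`.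
-/

section

variable {E : Type*} [NormedAddCommGroup E] [InnerProductSpace ℝ E]

theorem inner_sub_div_smul_eq_zero {a b : E} (hab : ⟪a, b⟫ ≠ 0) (u : E) :
    ⟪u - (⟪u, a⟫ / ⟪a, b⟫) • b, a⟫ = 0 := by
  rw [inner_sub_left, real_inner_smul_left, real_inner_comm a b, div_mul_cancel₀ _ hab, sub_self]

theorem norm_sub_smul_sq_of_inner_eq_zero {u b : E} (hb : ‖b‖ = 1) (hu : ⟪u, b⟫ = 0) (t : ℝ) :
    ‖u - t • b‖ ^ 2 = ‖u‖ ^ 2 + t ^ 2 := by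
  rw [norm_sub_sq_real, real_inner_smul_right, hu, norm_smul, hb, Real.norm_eq_abs, mul_one, sq_abs]
  ring

theorem norm_le_norm_sub_smul_of_inner_eq_zero {u b : E} (hb : ‖b‖ = 1) (hu : ⟪u, b⟫ = 0) (t : ℝ) :
    ‖u‖ ≤ ‖u - t • b‖ :=
  le_of_sq_le_sq (by rw [norm_sub_smul_sq_of_inner_eq_zero hb hu]; nlinarith) (norm_nonneg _)

theorem inner_sq_le_norm_sq_mul_one_sub_inner_sq {a b u : E} (ha : ‖a‖ = 1) (hb : ‖b‖ = 1)
    (hu : ⟪u, b⟫ = 0) : ⟪u, a⟫ ^ 2 ≤ ‖u‖ ^ 2 * (1 - ⟪a, b⟫ ^ 2) := by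
  have hproj : ⟪u, a - ⟪a, b⟫ • b⟫ = ⟪u, a⟫ := by
    rw [inner_sub_right, real_inner_smul_right, hu, mul_zero, sub_zero]
  have hnorm : ‖a - ⟪a, b⟫ • b‖ ^ 2 = 1 - ⟪a, b⟫ ^ 2 := by
    rw [norm_sub_sq_real, real_inner_smul_right, norm_smul, Real.norm_eq_abs, mul_pow, sq_abs,
      ha, hb]
    ring
  rw [← hproj, ← hnorm, ← mul_pow, ← sq_abs]
  exact pow_le_pow_left₀ (abs_nonneg _) (abs_real_inner_le_norm _ _) 2

theorem inner_mul_norm_sub_div_smul_le {a b u : E} (ha : ‖a‖ = 1) (hb : ‖b‖ = 1)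
    (hab : 0 < ⟪a, b⟫) (hu : ⟪u, b⟫ = 0) :
    ⟪a, b⟫ * ‖u - (⟪u, a⟫ / ⟪a, b⟫) • b‖ ≤ ‖u‖ := by
  set c := ⟪a, b⟫
  have hsq : (c * ‖u - (⟪u, a⟫ / c) • b‖) ^ 2 = c ^ 2 * ‖u‖ ^ 2 + ⟪u, a⟫ ^ 2 := by
    rw [mul_pow, norm_sub_smul_sq_of_inner_eq_zero hb hu]
    field_simp
  refine le_of_sq_le_sq ?_ (norm_nonneg u)
  rw [hsq]
  linarith [inner_sq_le_norm_sq_mul_one_sub_inner_sq ha hb hu]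

theorem LinearMap.IsSymmetric.inner_sq_le_inner_mul_inner {K : E →ₗ[ℝ] E} (hK : K.IsSymmetric)
    {x y : E} (hpos : ∀ t : ℝ, 0 ≤ ⟪K (x + t • y), x + t • y⟫) :
    ⟪K x, y⟫ ^ 2 ≤ ⟪K x, x⟫ * ⟪K y, y⟫ := by
  have hquad : ∀ t : ℝ, 0 ≤ ⟪K y, y⟫ * (t * t) + 2 * ⟪K x, y⟫ * t + ⟪K x, x⟫ := by
    intro t
    have hexp : ⟪K (x + t • y), x + t • y⟫ = ⟪K y, y⟫ * (t * t) + 2 * ⟪K x, y⟫ * t + ⟪K x, x⟫ := by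
      simp only [map_add, map_smul, inner_add_left, inner_add_right, real_inner_smul_left,
        real_inner_smul_right, hK y x, real_inner_comm (K x) y]
      ring
    exact hexp ▸ hpos t
  have := discrim_le_zero hquad
  rw [discrim] at this
  linarith

theorem LinearMap.IsSymmetric.norm_apply_le_of_inner_le {K : E →ₗ[ℝ] E} (hK : K.IsSymmetric)
    {S : Submodule ℝ E} {κ : ℝ} (hκ : 0 ≤ κ) (hpos : ∀ z ∈ S, 0 ≤ ⟪K z, z⟫)
    (hle : ∀ z ∈ S, ⟪K z, z⟫ ≤ κ * ‖z‖ ^ 2) {x : E} (hx : x ∈ S) (hKx : K x ∈ S) :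
    ‖K x‖ ≤ κ * ‖x‖ := by
  have hCS := hK.inner_sq_le_inner_mul_inner fun t ↦ hpos _ (S.add_mem hx (S.smul_mem t hKx))
  rw [real_inner_self_eq_norm_sq] at hCS
  have h4 : (‖K x‖ ^ 2) ^ 2 ≤ (κ * ‖x‖ ^ 2) * (κ * ‖K x‖ ^ 2) :=
    hCS.trans (mul_le_mul (hle x hx) (hle _ hKx) (hpos _ hKx) (by positivity))
  refine le_of_sq_le_sq ?_ (by positivity)
  rcases (sq_nonneg ‖K x‖).eq_or_lt with h0 | h0
  · rw [← h0]; positivity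
  · nlinarith

theorem mul_norm_le_norm_apply_of_le_inner {f : E → E} {κ : ℝ} {x : E}
    (h : κ * ‖x‖ ^ 2 ≤ ⟪f x, x⟫) : κ * ‖x‖ ≤ ‖f x‖ := by
  rcases (norm_nonneg x).eq_or_lt with h0 | h0
  · rw [← h0, mul_zero]; exact norm_nonneg _
  · refine le_of_mul_le_mul_right ?_ h0
    calc κ * ‖x‖ * ‖x‖ = κ * ‖x‖ ^ 2 := by ring
      _ ≤ ⟪f x, x⟫ := h
      _ ≤ ‖f x‖ * ‖x‖ := real_inner_le_norm _ _

end

theorem projVStar_eq_projV {D : ℕ} (n v dq : EuclideanSpace ℝ (Fin D)) :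
    projVStar n v dq = projV v n dq := by
  rw [projVStar, projV, real_inner_comm v n]

/-- if K is symmetric positive definite on n^⊥ with eigenvalues
in [κ_min, κ_max], then the collision operator Θ = ⟨n,v⟩ V* K V satisfies
κ_min cos φ ≤ ‖Θ‖ ≤ κ_max / cos φ, where cos φ = ⟨n,v⟩ > 0. -/
theorem stmt_17 {D : ℕ} (n v : EuclideanSpace ℝ (Fin D))
    (hn : ‖n‖ = 1) (hv : ‖v‖ = 1) (hcos : 0 < ⟪n, v⟫)
    (K : EuclideanSpace ℝ (Fin D) →ₗ[ℝ] EuclideanSpace ℝ (Fin D))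
    (κmin κmax : ℝ) (hκ : 0 < κmin) (hκ' : κmin ≤ κmax)
    (hsymm : ∀ x y, ⟪K x, y⟫ = ⟪x, K y⟫)
    (hKtang : ∀ x, ⟪x, n⟫ = 0 → ⟪K x, n⟫ = 0)
    (hbounds : ∀ x, ⟪x, n⟫ = 0 →
      κmin * ‖x‖ ^ 2 ≤ ⟪K x, x⟫ ∧ ⟪K x, x⟫ ≤ κmax * ‖x‖ ^ 2) :
    ∀ dv, ⟪dv, v⟫ = 0 →
      κmin * ⟪n, v⟫ * ‖dv‖ ≤ ‖collisionOp n v K dv‖ ∧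
      ‖collisionOp n v K dv‖ ≤ (κmax / ⟪n, v⟫) * ‖dv‖ := by
  intro dv hdv
  set c := ⟪n, v⟫
  set x := projV n v dv
  have hxn : ⟪x, n⟫ = 0 := inner_sub_div_smul_eq_zero hcos.ne' dv
  have hKxn : ⟪K x, n⟫ = 0 := hKtang x hxn
  have hmem {z} : z ∈ (ℝ ∙ n)ᗮ ↔ ⟪z, n⟫ = 0 := Submodule.mem_orthogonal_singleton_iff_inner_left
  have hκmax : 0 ≤ κmax := hκ.le.trans hκ'
  have hKx_le : ‖K x‖ ≤ κmax * ‖x‖ :=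
    LinearMap.IsSymmetric.norm_apply_le_of_inner_le hsymm hκmax
      (fun z hz ↦ (by positivity : 0 ≤ κmin * ‖z‖ ^ 2).trans (hbounds z (hmem.1 hz)).1)
      (fun z hz ↦ (hbounds z (hmem.1 hz)).2) (hmem.2 hxn) (hmem.2 hKxn)
  have hKx_ge : κmin * ‖x‖ ≤ ‖K x‖ := mul_norm_le_norm_apply_of_le_inner (hbounds x hxn).1
  have hΘ : ‖collisionOp n v K dv‖ = c * ‖projV v n (K x)‖ := by
    rw [collisionOp, projVStar_eq_projV, norm_smul, Real.norm_of_nonneg hcos.le]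
  have hcv : ⟪v, n⟫ = c := real_inner_comm _ _
  have hV_le : c * ‖x‖ ≤ ‖dv‖ := inner_mul_norm_sub_div_smul_le hn hv hcos hdv
  have hV_ge : ‖dv‖ ≤ ‖x‖ := norm_le_norm_sub_smul_of_inner_eq_zero hv hdv _
  have hVs_le : c * ‖projV v n (K x)‖ ≤ ‖K x‖ :=
    hcv ▸ inner_mul_norm_sub_div_smul_le hv hn (hcv ▸ hcos) hKxn
  have hVs_ge : ‖K x‖ ≤ ‖projV v n (K x)‖ := norm_le_norm_sub_smul_of_inner_eq_zero hn hKxn _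
  rw [hΘ]
  constructor
  · calc κmin * c * ‖dv‖ = c * (κmin * ‖dv‖) := by ring
      _ ≤ c * ‖projV v n (K x)‖ := by
        gcongr
        exact (mul_le_mul_of_nonneg_left hV_ge hκ.le).trans (hKx_ge.trans hVs_ge)
  · calc c * ‖projV v n (K x)‖ ≤ κmax * ‖x‖ := hVs_le.trans hKx_le
      _ ≤ κmax / c * ‖dv‖ := by
        rw [div_mul_eq_mul_div, le_div_iff₀ hcos, mul_assoc, mul_comm ‖x‖]
        gcongr
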